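/- arXiv:1801.05792 — 4 statements merged into one kernel-verified Lean document; each statement's English description precedes it below -/
import Mathlib

section
/- Let A be a set of alternatives with |A| ≥ 3, let X be the set of strict linear orders on A, let I = {1,...,N}, and let f : X^N → A be a social choice function that is unanimous and strategy-proof. If x ∈ X^N and a, b ∈ A are such that for every i ∈ I the top-ranked alternative of x_i lies in {a, b}, then f(x) ∈ {a, b}. (Tops only lemma) -/
/-- A strict linear order (complete, transitive, asymmetric binary relation) on `A`. -/
def Pref (A : Type*) : Type _ := {r : A → A → Prop // IsStrictTotalOrder A r}

/-- A profile of rankings for `N` individuals. -/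
def Profile (A : Type*) (N : ℕ) : Type _ := Fin N → Pref A

/-- `a` is ranked at the top of the ranking `p`. -/
def RanksTop {A : Type*} (p : Pref A) (a : A) : Prop := ∀ c, c ≠ a → p.1 a c

/-- `a` is ranked at the bottom of the ranking `p`. -/
def RanksBottom {A : Type*} (p : Pref A) (a : A) : Prop := ∀ c, c ≠ a → p.1 c a

/-- `a` is ranked second by `p`: above every alternative except exactly one. -/
def RanksSecond {A : Type*} (p : Pref A) (a : A) : Prop :=
  ∃ c, c ≠ a ∧ p.1 c a ∧ ∀ d, d ≠ a → d ≠ c → p.1 a d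

/-- `G` is decisive over `a` for the social choice function `f`. -/
def DecisiveOver {A : Type*} {N : ℕ} (f : Profile A N → A) (G : Set (Fin N)) (a : A) : Prop :=
  ∀ x : Profile A N, (∀ i ∈ G, RanksTop (x i) a) → f x = a

/-- `G` is decisive (over every alternative) for `f`. -/
def Decisive {A : Type*} {N : ℕ} (f : Profile A N → A) (G : Set (Fin N)) : Prop :=
  ∀ a : A, DecisiveOver f G a

/-- `f` is unanimous: the whole group of individuals is decisive. -/
def Unanimous {A : Type*} {N : ℕ} (f : Profile A N → A) : Prop :=
  Decisive f Set.univ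

/-- `f` is manipulable at `x` by `i` via `xi'`. -/
def ManipulableAt {A : Type*} {N : ℕ} (f : Profile A N → A)
    (x : Profile A N) (i : Fin N) (xi' : Pref A) : Prop :=
  (x i).1 (f (Function.update x i xi')) (f x)

/-- `f` is strategy-proof: not manipulable. -/
def StrategyProof {A : Type*} {N : ℕ} (f : Profile A N → A) : Prop :=
  ∀ (x : Profile A N) (i : Fin N) (xi' : Pref A), ¬ ManipulableAt f x i xi'

/-- `f` is dictatorial: some singleton group is decisive. -/
def Dictatorial {A : Type*} {N : ℕ} (f : Profile A N → A) : Prop :=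
  ∃ i : Fin N, Decisive f {i}

/-! Call a voter settled if `a` and `b` are their two top alternatives. A settled voter prefers
both `a` and `b` to every other outcome, so by strategy-proofness no change of their ranking can
move an outcome outside `{a, b}` into it. Hence, if every voter tops `a` or is settled, switching
the settled voters one at a time to `a` first keeps the outcome outside `{a, b}` up to a profile
where everybody tops `a`, contradicting unanimity; likewise with `a` and `b` exchanged.

Otherwise some unsettled voter `j` tops `b` and some unsettled voter `k` tops `a`, and we induct on
the number of unsettled voters. Settling `j` (keeping `b` first) yields an outcome in `{a, b}`,
which is `a` unless `f x = b`, since otherwise `j` would manipulate from `x`. Symmetrically, settling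
`k` yields `b` unless `f x = a`. When both are settled, `j` could manipulate by going back to `x j`
unless the outcome is `b`, and `k` likewise unless it is `a`; so `a = b`, although `j` tops `b`
and not `a`. -/

section

variable {A : Type*} {N : ℕ}

open Function

namespace Pref

def raise (a : A) (p : Pref A) : Pref A :=
  ⟨fun y z => (y = a ∧ z ≠ a) ∨ (y ≠ a ∧ z ≠ a ∧ p.1 y z), by
    have := p.2
    refine { trichotomous := fun y z hyz hzy => ?_, irrefl := fun y => ?_,
             trans := fun y z w hyz hzw => ?_ }
    · rcases trichotomous_of p.1 y z with h | h | h <;> grind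
    · grind [irrefl_of p.1 y]
    · grind [trans_of p.1 (a := y) (b := z) (c := w)]⟩

lemma ranksTop_raise (a : A) (p : Pref A) : RanksTop (raise a p) a :=
  fun _ hc => Or.inl ⟨rfl, hc⟩

end Pref

open Pref

def RanksTopTwo (p : Pref A) (a b : A) : Prop :=
  ∀ d, d ≠ a → d ≠ b → p.1 a d ∧ p.1 b d

lemma RanksTopTwo.symm {p : Pref A} {a b : A} (h : RanksTopTwo p a b) : RanksTopTwo p b a :=
  fun d hb ha => (h d ha hb).symm

lemma ranksTopTwo_raise_raise (a b : A) (p : Pref A) : RanksTopTwo (raise a (raise b p)) a b :=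
  fun d ha hb => by
    refine ⟨Or.inl ⟨rfl, ha⟩, ?_⟩
    rcases eq_or_ne b a with rfl | hba
    exacts [Or.inl ⟨rfl, ha⟩, Or.inr ⟨hba, ha, Or.inl ⟨rfl, hb⟩⟩]

lemma Profile.update_apply (x : Profile A N) (j i : Fin N) (p : Pref A) :
    update x j p i = if i = j then p else x i :=
  Function.update_apply ..

lemma Function.induction_update {ι β : Type*} [Fintype ι] [DecidableEq ι]
    {P : (ι → β) → Prop} (x y : ι → β) (hx : P x)
    (step : ∀ (s : Finset ι) (i : ι), i ∉ s → P (s.piecewise y x) →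
      P (update (s.piecewise y x) i (y i))) : P y := by
  suffices ∀ s : Finset ι, P (s.piecewise y x) by simpa using this Finset.univ
  intro s
  induction s using Finset.induction_on with
  | empty => simpa using hx
  | insert i s hi ih => simpa [Finset.piecewise_insert] using step s i hi ih

namespace StrategyProof

variable {f : Profile A N → A} {x : Profile A N} {i : Fin N} {p : Pref A}

lemma not_rel_update (hS : StrategyProof f) : ¬ (x i).1 (f (update x i p)) (f x) :=
  hS x i p

lemma eq_of_update_eq (hS : StrategyProof f) {a : A} (ha : RanksTop (x i) a)
    (hu : f (update x i p) = a) : f x = a := by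
  by_contra hne
  exact hS.not_rel_update (hu ▸ ha _ hne)

lemma eq_of_update_update (hS : StrategyProof f) {j k : Fin N} {q : Pref A} {c : A}
    (hjk : j ≠ k) (hp : RanksTop p c) (hq : f (update x k q) = c) :
    f (update (update x k q) j p) = c := by
  refine hS.eq_of_update_eq (i := j) (p := x j) (by rwa [update_self]) ?_
  rwa [update_idem, update_eq_self_iff.2 (update_of_ne hjk q x).symm]

lemma update_ne_of_ranksTopTwo (hS : StrategyProof f) {a b : A} (hx : RanksTopTwo (x i) a b)
    (hfx : f x ≠ a ∧ f x ≠ b) : f (update x i p) ≠ a ∧ f (update x i p) ≠ b := by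
  constructor <;> rintro hu <;> apply hS.not_rel_update <;> rw [hu]
  exacts [(hx _ hfx.1 hfx.2).1, (hx _ hfx.1 hfx.2).2]

end StrategyProof

lemma eq_or_eq_of_forall_ranksTop_or_ranksTopTwo {f : Profile A N → A} (hU : Unanimous f)
    (hS : StrategyProof f) {a b : A} (x : Profile A N)
    (hx : ∀ i, RanksTop (x i) a ∨ RanksTopTwo (x i) a b) : f x = a ∨ f x = b := by
  classical
  by_contra! hfx
  let y : Profile A N := fun i => if RanksTop (x i) a then x i else raise a (x i)
  have hy : f y ≠ a ∧ f y ≠ b := by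
    refine Function.induction_update (P := fun z => f z ≠ a ∧ f z ≠ b) x y hfx ?_
    intro s i hi hz
    have hzi : s.piecewise y x i = x i := Finset.piecewise_eq_of_notMem _ _ _ hi
    by_cases hxi : RanksTop (x i) a
    · rwa [show y i = s.piecewise y x i by simp [y, hxi, hzi], update_eq_self]
    · exact hS.update_ne_of_ranksTopTwo (hzi ▸ (hx i).resolve_left hxi) hz
  refine hy.1 (hU a y fun i _ => ?_)
  by_cases hxi : RanksTop (x i) a
  · simp [y, hxi]
  · simpa [y, hxi] using ranksTop_raise a (x i)

open Classical in
noncomputable def unsettledVoters (a b : A) (x : Profile A N) : Finset (Fin N) :=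
  Finset.univ.filter fun i => ¬ RanksTopTwo (x i) a b

lemma card_unsettledVoters_update_lt {a b : A} {x : Profile A N} {j : Fin N} {p : Pref A}
    (hj : ¬ RanksTopTwo (x j) a b) (hp : RanksTopTwo p a b) :
    (unsettledVoters a b (update x j p)).card < (unsettledVoters a b x).card := by
  have : unsettledVoters a b (update x j p) = (unsettledVoters a b x).erase j := by
    ext i
    by_cases hij : i = j <;> simp [unsettledVoters, Profile.update_apply, *]
  rw [this]
  exact Finset.card_erase_lt_of_mem (by simpa [unsettledVoters])

lemma forall_ranksTop_or_ranksTop_update {a b : A} {x : Profile A N}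
    (hx : ∀ i, RanksTop (x i) a ∨ RanksTop (x i) b) {j : Fin N} {p : Pref A}
    (hp : RanksTop p a ∨ RanksTop p b) :
    ∀ i, RanksTop (update x j p i) a ∨ RanksTop (update x j p i) b :=
  (forall_update_iff x fun _ r => RanksTop r a ∨ RanksTop r b).2 ⟨hp, fun i _ => hx i⟩

theorem eq_or_eq_of_forall_ranksTop_or_ranksTop {f : Profile A N → A} (hU : Unanimous f)
    (hS : StrategyProof f) {a b : A} (x : Profile A N)
    (hx : ∀ i, RanksTop (x i) a ∨ RanksTop (x i) b) : f x = a ∨ f x = b := by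
  by_cases hA : ∀ i, RanksTop (x i) a ∨ RanksTopTwo (x i) a b
  · exact eq_or_eq_of_forall_ranksTop_or_ranksTopTwo hU hS x hA
  by_cases hB : ∀ i, RanksTop (x i) b ∨ RanksTopTwo (x i) b a
  · exact (eq_or_eq_of_forall_ranksTop_or_ranksTopTwo hU hS x hB).symm
  push Not at hA hB
  obtain ⟨j, hja, hj⟩ := hA
  obtain ⟨k, hkb, hk⟩ := hB
  have hjb : RanksTop (x j) b := (hx j).resolve_left hja
  have hka : RanksTop (x k) a := (hx k).resolve_right hkb
  have hjk : j ≠ k := by rintro rfl; exact hja hka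
  set p := raise b (raise a (x j))
  set q := raise a (raise b (x k))
  have hp : RanksTopTwo p a b := (ranksTopTwo_raise_raise b a _).symm
  have hq : RanksTopTwo q a b := ranksTopTwo_raise_raise a b _
  rcases eq_or_eq_of_forall_ranksTop_or_ranksTop hU hS (update x j p)
      (forall_ranksTop_or_ranksTop_update hx (Or.inr (ranksTop_raise _ _))) with hpa | hpb
  swap; · exact Or.inr (hS.eq_of_update_eq hjb hpb)
  rcases eq_or_eq_of_forall_ranksTop_or_ranksTop hU hS (update x k q)
      (forall_ranksTop_or_ranksTop_update hx (Or.inl (ranksTop_raise _ _))) with hqa | hqb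
  · exact Or.inl (hS.eq_of_update_eq hka hqa)
  have hb : f (update (update x k q) j p) = b :=
    hS.eq_of_update_update hjk (ranksTop_raise b _) hqb
  have ha : f (update (update x k q) j p) = a :=
    update_comm hjk p q x ▸ hS.eq_of_update_update hjk.symm (ranksTop_raise a _) hpa
  exact absurd (ha.symm.trans hb ▸ hjb) hja
termination_by (unsettledVoters a b x).card
decreasing_by
  · exact card_unsettledVoters_update_lt hj hp
  · exact card_unsettledVoters_update_lt (mt RanksTopTwo.symm hk) hq

end

theorem tops_only_general {A : Type*} {N : ℕ}
    (f : Profile A N → A) (hUNM : Unanimous f) (hSTP : StrategyProof f)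
    (x : Profile A N) (a b : A)
    (htop : ∀ i : Fin N, RanksTop (x i) a ∨ RanksTop (x i) b) :
    f x = a ∨ f x = b :=
  eq_or_eq_of_forall_ranksTop_or_ranksTop hUNM hSTP x htop

/-- **Tops only lemma**: if every individual's top-ranked alternative lies in `{a, b}`,
then the social choice lies in `{a, b}`. -/
theorem tops_only {A : Type*} {N : ℕ} (hA : 3 ≤ Cardinal.mk A)
    (f : Profile A N → A) (hUNM : Unanimous f) (hSTP : StrategyProof f)
    (x : Profile A N) (a b : A)
    (htop : ∀ i : Fin N, RanksTop (x i) a ∨ RanksTop (x i) b) :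
    f x = a ∨ f x = b :=
  tops_only_general f hUNM hSTP x a b htop
end

section
/- Let A be a set of alternatives with |A| ≥ 3, let X be the set of strict linear orders on A, let I = {1,...,N}, and let f : X^N → A be a social choice function that is unanimous and strategy-proof. Let G ⊆ I and let x ∈ X^N be a profile such that a ∈ A is ranked at the top of x_i for all i ∈ G and at the bottom of x_j for all j ∈ I \ G. If f(x) = a, then G is decisive. (Extension lemma) -/
/-!
Strategy-proofness implies Maskin monotonicity: the outcome survives any change of the profile
that does not move an alternative above it in anybody's ranking. Since `a` is at the bottom for
everyone outside `G`, this already makes `G` decisive over `a`. For `b ≠ a` pick a third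
alternative `c`. Comparing profiles in which `G` ranks `b` first and the others rank `c` first,
with the other one of `b, c` second or last, monotonicity and Pareto efficiency force either `G`
to be decisive over `b` or `Gᶜ` to be decisive over `c`; the latter is impossible because `G` is
decisive over `a ≠ c`.
-/

namespace Pref

variable {A : Type*}

theorem ne_of_rel (p : Pref A) {x y : A} (h : p.1 x y) : x ≠ y := by
  rintro rfl
  exact p.2.irrefl x h

theorem not_rel_of_rel (p : Pref A) {x y : A} (h : p.1 x y) : ¬ p.1 y x :=
  fun h' => p.2.irrefl x (p.2.trans x y x h h')

theorem rel_or_rel (p : Pref A) {x y : A} (h : x ≠ y) : p.1 x y ∨ p.1 y x := by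
  have := p.2
  rcases trichotomous_of p.1 x y with hxy | hxy | hyx
  exacts [Or.inl hxy, absurd hxy h, Or.inr hyx]

/-- The ranking by decreasing score, ties broken by a fixed well-ordering of `A`. -/
noncomputable def ofScore (s : A → ℕ) : Pref A :=
  letI : LinearOrder A := IsWellOrder.linearOrder WellOrderingRel
  let e : A ↪ Lex (ℕ × A) :=
    ⟨fun x => toLex (s x, x), fun _ _ h => congrArg (fun p => (ofLex p).2) h⟩
  ⟨e ⁻¹'o (· > ·), (RelEmbedding.preimage e (· > ·)).isStrictTotalOrder⟩

theorem ofScore_rel {s : A → ℕ} {x y : A} (h : s y < s x) : (ofScore s).1 x y := by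
  let : LinearOrder A := IsWellOrder.linearOrder WellOrderingRel
  exact Prod.Lex.toLex_lt_toLex.2 (Or.inl h)

open Classical in
noncomputable def topTwo (a b : A) : Pref A :=
  ofScore fun c => if c = a then 2 else if c = b then 1 else 0

open Classical in
noncomputable def topBottom (a b : A) : Pref A :=
  ofScore fun c => if c = a then 2 else if c = b then 0 else 1

theorem ranksTop_topTwo (a b : A) : RanksTop (topTwo a b) a := fun c hc =>
  ofScore_rel (by simp only [hc, if_true, if_false]; split_ifs <;> omega)

theorem topTwo_rel {a b c : A} (hca : c ≠ a) (hcb : c ≠ b) : (topTwo a b).1 b c :=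
  ofScore_rel (by simp only [hca, hcb, if_true, if_false]; split_ifs <;> omega)

theorem ranksTop_topBottom (a b : A) : RanksTop (topBottom a b) a := fun c hc =>
  ofScore_rel (by simp only [hc, if_true, if_false]; split_ifs <;> omega)

theorem ranksBottom_topBottom {a b : A} (hab : a ≠ b) : RanksBottom (topBottom a b) b :=
  fun c hc => ofScore_rel (by simp only [hab.symm, hc, if_true, if_false]; split_ifs <;> omega)

theorem rel_of_ranksTop {p q : Pref A} {d : A} (hq : RanksTop q d) {e : A} (he : p.1 d e) :
    q.1 d e :=
  hq e (p.ne_of_rel he).symm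

end Pref

namespace Profile

variable {A : Type*} {N : ℕ}

open Classical in
noncomputable def piecewise (D : Set (Fin N)) (p q : Pref A) : Profile A N :=
  fun i => if i ∈ D then p else q

theorem piecewise_of_mem {D : Set (Fin N)} {i : Fin N} (hi : i ∈ D) (p q : Pref A) :
    piecewise D p q i = p := if_pos hi

theorem piecewise_of_notMem {D : Set (Fin N)} {i : Fin N} (hi : i ∉ D) (p q : Pref A) :
    piecewise D p q i = q := if_neg hi

theorem piecewise_cases {D : Set (Fin N)} {p q : Pref A} (P : Pref A → Prop) (hp : P p)
    (hq : P q) (i : Fin N) : P (piecewise D p q i) := by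
  by_cases hi : i ∈ D
  · rwa [piecewise_of_mem hi]
  · rwa [piecewise_of_notMem hi]

end Profile

section SocialChoice

open Profile Pref

variable {A : Type*} {N : ℕ} {f : Profile A N → A}

def MaskinMonotone (f : Profile A N → A) : Prop :=
  ∀ ⦃x y : Profile A N⦄ ⦃d : A⦄, f x = d → (∀ i e, (x i).1 d e → (y i).1 d e) → f y = d

theorem StrategyProof.apply_update_eq (hf : StrategyProof f) {x : Profile A N} {i : Fin N}
    {p : Pref A} (h : ∀ e, (x i).1 (f x) e → p.1 (f x) e) :
    f (Function.update x i p) = f x := by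
  unfold Profile at *
  by_contra hne
  have up : ¬ (x i).1 (f (Function.update x i p)) (f x) := hf x i p
  have down : ¬ p.1 (f x) (f (Function.update x i p)) := by
    simpa [ManipulableAt] using hf (Function.update x i p) i (x i)
  rcases (x i).rel_or_rel hne with h' | h'
  exacts [up h', down (h _ h')]

theorem StrategyProof.maskinMonotone (hf : StrategyProof f) : MaskinMonotone f := by
  classical
  intro x y d hx h
  subst hx
  unfold Profile at *
  suffices ∀ S : Finset (Fin N), f (S.piecewise y x) = f x by
    simpa using this Finset.univ
  intro S
  induction S using Finset.induction_on with
  | empty => simp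
  | insert j S hj ih =>
    rw [Finset.piecewise_insert, ← ih]
    refine hf.apply_update_eq fun e he => ?_
    rw [ih, Finset.piecewise_eq_of_notMem _ _ _ hj] at he
    rw [ih]
    exact h j e he

namespace MaskinMonotone

theorem decisiveOver_of_ranksBottom (hm : MaskinMonotone f) {D : Set (Fin N)}
    {x : Profile A N} {a : A} (hbot : ∀ j ∉ D, RanksBottom (x j) a) (hx : f x = a) :
    DecisiveOver f D a := by
  intro y hy
  refine hm hx fun i e he => ?_
  by_cases hi : i ∈ D
  · exact rel_of_ranksTop (hy i hi) he
  · exact absurd (hbot i hi e ((x i).ne_of_rel he).symm) ((x i).not_rel_of_rel he)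

/-- Pareto efficiency. -/
theorem apply_ne_of_forall_rel (hm : MaskinMonotone f) (hu : Unanimous f) {x : Profile A N}
    {α d : A} (hαd : α ≠ d) (h : ∀ i, (x i).1 α d) : f x ≠ d := by
  intro hx
  have hZd : f (fun _ => topTwo α d) = d := hm hx fun i e he =>
    topTwo_rel (fun heα => (x i).not_rel_of_rel he (heα ▸ h i))
      ((x i).ne_of_rel he).symm
  have hZα : f (fun _ => topTwo α d) = α := hu α _ fun _ _ => ranksTop_topTwo α d
  exact hαd (hZα.symm.trans hZd)

theorem apply_eq_or_eq (hm : MaskinMonotone f) (hu : Unanimous f) {x : Profile A N}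
    {α β : A} (h : ∀ i c, c ≠ α → c ≠ β → (x i).1 α c) : f x = α ∨ f x = β := by
  by_contra! hne
  exact hm.apply_ne_of_forall_rel hu hne.1.symm (fun i => h i _ hne.1 hne.2) rfl

theorem decisiveOver_or_decisiveOver_compl (hm : MaskinMonotone f) (hu : Unanimous f)
    (D : Set (Fin N)) {α β : A} (hαβ : α ≠ β) :
    DecisiveOver f D β ∨ DecisiveOver f Dᶜ α := by
  set V : Profile A N := piecewise D (topTwo β α) (topBottom α β)
  set U : Profile A N := piecewise D (topBottom β α) (topTwo α β)
  set Z : Profile A N := piecewise D (topTwo β α) (topTwo α β)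
  have hV : f V = α ∨ f V = β := hm.apply_eq_or_eq hu fun i c hcα hcβ =>
    piecewise_cases (·.1 α c) (topTwo_rel hcβ hcα) (ranksTop_topBottom α β c hcα) i
  rcases hV with hVα | hVβ
  swap
  · refine .inl (hm.decisiveOver_of_ranksBottom (fun j hj => ?_) hVβ)
    simp only [V, piecewise_of_notMem hj]
    exact ranksBottom_topBottom hαβ
  have hU : f U = β ∨ f U = α := hm.apply_eq_or_eq hu fun i c hcβ hcα =>
    piecewise_cases (·.1 β c) (ranksTop_topBottom β α c hcβ) (topTwo_rel hcα hcβ) i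
  rcases hU with hUβ | hUα
  swap
  · refine .inr (hm.decisiveOver_of_ranksBottom (fun j hj => ?_) hUα)
    simp only [U, piecewise_of_mem (Set.not_notMem.1 hj)]
    exact ranksBottom_topBottom hαβ.symm
  -- `Z` is reached from `V` by lifting `α` and from `U` by lifting `β`.
  have hZα : f Z = α := hm hVα fun i e he => by
    by_cases hi : i ∈ D
    · simpa only [V, Z, piecewise_of_mem hi] using he
    · simp only [Z, piecewise_of_notMem hi]
      exact rel_of_ranksTop (ranksTop_topTwo α β) he
  have hZβ : f Z = β := hm hUβ fun i e he => by
    by_cases hi : i ∈ D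
    · simp only [Z, piecewise_of_mem hi]
      exact rel_of_ranksTop (ranksTop_topTwo β α) he
    · simpa only [U, Z, piecewise_of_notMem hi] using he
  exact absurd (hZα.symm.trans hZβ) hαβ

end MaskinMonotone

theorem DecisiveOver.eq_of_disjoint {D D' : Set (Fin N)} {β β' : A} (h : DecisiveOver f D β)
    (h' : DecisiveOver f D' β') (hD : Disjoint D D') : β = β' := by
  let P : Profile A N := piecewise D (topTwo β β') (topTwo β' β)
  have hP : f P = β := h P fun i hi => by
    simp only [P, piecewise_of_mem hi]
    exact ranksTop_topTwo β β'
  have hP' : f P = β' := h' P fun i hi => by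
    simp only [P, piecewise_of_notMem (Set.disjoint_right.1 hD hi)]
    exact ranksTop_topTwo β' β
  exact hP.symm.trans hP'

end SocialChoice

theorem extension_lemma_general {A : Type*} {N : ℕ} (hA : 3 ≤ Cardinal.mk A)
    (f : Profile A N → A) (hUNM : Unanimous f) (hSTP : StrategyProof f)
    (G : Set (Fin N)) (x : Profile A N) (a : A)
    (hbot : ∀ j ∉ G, RanksBottom (x j) a)
    (hfa : f x = a) :
    Decisive f G := by
  have hm := hSTP.maskinMonotone
  have hGa : DecisiveOver f G a := hm.decisiveOver_of_ranksBottom hbot hfa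
  intro b
  obtain ⟨c, hca, hcb⟩ := Cardinal.exists_ne_ne_of_three_le hA a b
  refine (hm.decisiveOver_or_decisiveOver_compl hUNM G hcb).resolve_right fun hGc => hca ?_
  exact (hGa.eq_of_disjoint hGc disjoint_compl_right).symm

/-- **Extension lemma**: if `a` is ranked top by every member of `G` and bottom by every
individual outside `G`, and `f` chooses `a` at this profile, then `G` is decisive. -/
theorem extension_lemma {A : Type*} {N : ℕ} (hA : 3 ≤ Cardinal.mk A)
    (f : Profile A N → A) (hUNM : Unanimous f) (hSTP : StrategyProof f)
    (G : Set (Fin N)) (x : Profile A N) (a : A)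
    (htop : ∀ i ∈ G, RanksTop (x i) a)
    (hbot : ∀ j ∉ G, RanksBottom (x j) a)
    (hfa : f x = a) :
    Decisive f G :=
  extension_lemma_general hA f hUNM hSTP G x a hbot hfa
end

section
/- Let A be a set of alternatives with |A| ≥ 3, let X be the set of strict linear orders on A, let I = {1,...,N}, and let f : X^N → A be a social choice function that is unanimous and strategy-proof. If a group G ⊆ I is decisive over some alternative a ∈ A, then G is decisive (over every alternative). -/
/-!
Strategy-proofness yields Maskin monotonicity: the outcome is unchanged when, for every voter,
the set of alternatives ranked below it weakly grows. Combined with unanimity this gives Pareto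
efficiency; combined with decisiveness of `G` over `a` it shows that an outcome other than `a` is
ranked above `a` by some member of `G`.

Fix `b ≠ a` and a third alternative `c`. If `G` ranks `b ≻ a ≻ c ≻ ⋯` and the others
`c ≻ b ≻ a ≻ ⋯`, then only `b` beats `a` within `G` and `b` Pareto dominates `a`, so `b` is chosen;
by monotonicity it stays chosen when `G` switches to `b ≻ c ≻ a ≻ ⋯`. When the others then switch
to `c ≻ a ≻ ⋯ ≻ b`, the outcome is `b` or `c`, and `c` is excluded because monotonicity would make
`c` the outcome before the switch as well. So `b` wins a profile in which `G` ranks it first and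
everyone else ranks it last, and monotonicity carries this over to every profile in which `G`
ranks `b` first.
-/

namespace Pref

variable {A : Type*}

instance (p : Pref A) : IsStrictTotalOrder A p.1 := p.2

noncomputable instance : Inhabited (Pref A) := ⟨⟨WellOrderingRel, inferInstance⟩⟩

def liftTop (p : Pref A) (x : A) : Pref A :=
  ⟨fun u v => (u = x ∧ v ≠ x) ∨ (u ≠ x ∧ v ≠ x ∧ p.1 u v), by
    refine { trichotomous := ?_, irrefl := ?_, trans := ?_ }
    · intro u v h1 h2
      rcases trichotomous_of p.1 u v with h | h | h <;> grind
    · intro u; have := irrefl_of p.1 u; grind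
    · intro u v w; have : p.1 u v → p.1 v w → p.1 u w := trans_of p.1; grind⟩

def liftBottom (p : Pref A) (x : A) : Pref A :=
  ⟨fun u v => (u ≠ x ∧ v = x) ∨ (u ≠ x ∧ v ≠ x ∧ p.1 u v), by
    refine { trichotomous := ?_, irrefl := ?_, trans := ?_ }
    · intro u v h1 h2
      rcases trichotomous_of p.1 u v with h | h | h <;> grind
    · intro u; have := irrefl_of p.1 u; grind
    · intro u v w; have : p.1 u v → p.1 v w → p.1 u w := trans_of p.1; grind⟩

@[simp]
theorem liftTop_rel (p : Pref A) (x u v : A) :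
    (p.liftTop x).1 u v ↔ (u = x ∧ v ≠ x) ∨ (u ≠ x ∧ v ≠ x ∧ p.1 u v) := Iff.rfl

@[simp]
theorem liftBottom_rel (p : Pref A) (x u v : A) :
    (p.liftBottom x).1 u v ↔ (u ≠ x ∧ v = x) ∨ (u ≠ x ∧ v ≠ x ∧ p.1 u v) := Iff.rfl

end Pref

open Function

section

variable {A : Type*} {N : ℕ} {f : Profile A N → A}

theorem StrategyProof.apply_update_eq_of_lowerContour_subset (hf : StrategyProof f)
    {x : Profile A N} {i : Fin N} {r : Pref A} (h : ∀ v, (x i).1 (f x) v → r.1 (f x) v) :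
    f (update x i r) = f x := by
  -- `Profile` does not unfold during rewriting, so `update` lemmas need the function type.
  change Fin N → Pref A at x
  have hold : ¬ (x i).1 (f (update x i r)) (f x) := hf x i r
  have hnew : ¬ r.1 (f x) (f (update x i r)) := by
    simpa [ManipulableAt] using hf (update x i r) i (x i)
  rcases trichotomous_of (x i).1 (f (update x i r)) (f x) with hlt | heq | hgt
  · exact absurd hlt hold
  · exact heq
  · exact absurd (h _ hgt) hnew

theorem StrategyProof.apply_eq_of_lowerContour_subset (hf : StrategyProof f)
    {x y : Profile A N} (h : ∀ i v, (x i).1 (f x) v → (y i).1 (f x) v) : f y = f x := by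
  classical
  change Fin N → Pref A at x y
  suffices ∀ S : Finset (Fin N), f (S.piecewise y x) = f x by
    simpa using this Finset.univ
  intro S
  induction S using Finset.induction_on with
  | empty => simp
  | insert j S hj ih =>
    rw [Finset.piecewise_insert, ← ih]
    refine hf.apply_update_eq_of_lowerContour_subset fun v hv => ?_
    rw [ih, Finset.piecewise_eq_of_notMem _ _ _ hj] at hv
    rw [ih]
    exact h j v hv

open Classical in
noncomputable def Profile.split (G : Set (Fin N)) (P Q : Pref A) : Profile A N :=
  fun i => if i ∈ G then P else Q

@[simp]
theorem Profile.split_of_mem {G : Set (Fin N)} {P Q : Pref A} {i : Fin N} (hi : i ∈ G) :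
    split G P Q i = P := if_pos hi

@[simp]
theorem Profile.split_of_notMem {G : Set (Fin N)} {P Q : Pref A} {i : Fin N} (hi : i ∉ G) :
    split G P Q i = Q := if_neg hi

theorem DecisiveOver.exists_rel_of_apply_ne {G : Set (Fin N)} {a : A}
    (hG : DecisiveOver f G a) (hf : StrategyProof f) {x : Profile A N} (hx : f x ≠ a) :
    ∃ i ∈ G, (x i).1 (f x) a := by
  by_contra! hlow
  have hup (i : Fin N) (hi : i ∈ G) : (x i).1 a (f x) :=
    (trichotomous_of (x i).1 (f x) a).resolve_left (hlow i hi) |>.resolve_left hx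
  let R : Pref A := default
  have hya : f (.split G ((R.liftTop (f x)).liftTop a) (R.liftTop (f x))) = a :=
    hG _ fun i hi c hc => by simp [hi, hc]
  have hyx : f (.split G ((R.liftTop (f x)).liftTop a) (R.liftTop (f x))) = f x :=
    hf.apply_eq_of_lowerContour_subset fun i v hv => by
      have hvx : v ≠ f x := by rintro rfl; exact irrefl _ hv
      by_cases hi : i ∈ G
      · have hva : v ≠ a := by rintro rfl; exact asymm hv (hup i hi)
        simp [hi, hx, hva, hvx]
      · simp [hi, hvx]
  exact hx (hyx.symm.trans hya)

theorem Unanimous.apply_ne (hU : Unanimous f) (hf : StrategyProof f) {x : Profile A N}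
    {v w : A} (hvw : v ≠ w) (hx : ∀ i, (x i).1 v w) : f x ≠ w := by
  rintro rfl
  obtain ⟨i, -, hi⟩ := (hU v).exists_rel_of_apply_ne hf hvw.symm
  exact asymm hi (hx i)

theorem DecisiveOver.apply_mem {G : Set (Fin N)} {a : A} (hG : DecisiveOver f G a)
    (hU : Unanimous f) (hf : StrategyProof f) {x : Profile A N} {v : A} {S : Set A}
    (hva : v ≠ a) (hv : ∀ i, (x i).1 v a) (hS : ∀ i ∈ G, ∀ u, (x i).1 u a → u ∈ S) :
    f x ∈ S := by
  obtain ⟨i, hi, hfi⟩ := hG.exists_rel_of_apply_ne hf (hU.apply_ne hf hva hv)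
  exact hS i hi _ hfi

theorem DecisiveOver.apply_split_mem {G : Set (Fin N)} {a : A} (hG : DecisiveOver f G a)
    (hU : Unanimous f) (hf : StrategyProof f) {P Q : Pref A} {v : A} {S : Set A}
    (hva : v ≠ a) (hP : P.1 v a) (hQ : Q.1 v a) (hS : ∀ u, P.1 u a → u ∈ S) :
    f (.split G P Q) ∈ S :=
  hG.apply_mem hU hf hva (fun i => by by_cases hi : i ∈ G <;> simpa [hi])
    fun i hi => by simpa [hi] using hS

theorem StrategyProof.apply_split_eq {G : Set (Fin N)} (hf : StrategyProof f)
    {P Q P' Q' : Pref A} {w : A} (hw : f (.split G P Q) = w)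
    (hP : ∀ v, P.1 w v → P'.1 w v) (hQ : ∀ v, Q.1 w v → Q'.1 w v) :
    f (.split G P' Q') = w := by
  rw [← hw]
  refine hf.apply_eq_of_lowerContour_subset fun i v hv => ?_
  rw [hw] at hv ⊢
  by_cases hi : i ∈ G
  · simpa [hi] using hP v (by simpa [hi] using hv)
  · simpa [hi] using hQ v (by simpa [hi] using hv)

theorem StrategyProof.decisiveOver_of_apply_eq {G : Set (Fin N)} (hf : StrategyProof f)
    {z : Profile A N} {b : A} (hz : f z = b) (htop : ∀ i ∈ G, RanksTop (z i) b)
    (hbot : ∀ i ∉ G, RanksBottom (z i) b) : DecisiveOver f G b := by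
  intro x hx
  rw [← hz]
  refine hf.apply_eq_of_lowerContour_subset fun i v hv => ?_
  rw [hz] at hv ⊢
  have hvb : v ≠ b := by rintro rfl; exact irrefl _ hv
  by_cases hi : i ∈ G
  · exact hx i hi v hvb
  · exact absurd (hbot i hi v hvb) (asymm hv)

end

/-- If a group is decisive over some alternative, it is decisive over every alternative. -/
theorem decisiveOver_implies_decisive {A : Type*} {N : ℕ} (hA : 3 ≤ Cardinal.mk A)
    (f : Profile A N → A) (hUNM : Unanimous f) (hSTP : StrategyProof f)
    (G : Set (Fin N)) (a : A) (hdec : DecisiveOver f G a) :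
    Decisive f G := by
  intro b
  obtain rfl | hba := eq_or_ne b a
  · exact hdec
  obtain ⟨c, hca, hcb⟩ := Cardinal.exists_ne_ne_of_three_le hA a b
  have hne : a ≠ b ∧ a ≠ c ∧ b ≠ c ∧ b ≠ a ∧ c ≠ a ∧ c ≠ b :=
    ⟨hba.symm, hca.symm, hcb.symm, hba, hca, hcb⟩
  let R : Pref A := default
  let B₁ := ((R.liftTop c).liftTop a).liftTop b
  let B₂ := ((R.liftTop a).liftTop c).liftTop b
  let C₁ := ((R.liftBottom b).liftTop a).liftTop c
  let C₂ := ((R.liftTop a).liftTop b).liftTop c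
  have h₁ : f (.split G B₁ C₂) = b := hdec.apply_split_mem (S := {b}) hUNM hSTP hba
    (by simp [B₁, hne]) (by simp [C₂, hne]) fun u hu => by simpa [B₁, hne] using hu
  have h₂ : f (.split G B₂ C₂) = b := hSTP.apply_split_eq h₁ (by simp [B₁, B₂]) fun _ => id
  have h₃ : f (.split G B₂ C₁) = b := by
    have hbc : f (.split G B₂ C₁) ∈ ({b, c} : Set A) := hdec.apply_split_mem hUNM hSTP hca
      (by simp [B₂, hne]) (by simp [C₁, hne]) fun u hu => by simp only [B₂, Pref.liftTop_rel] at hu; tauto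
    refine hbc.resolve_right fun hc => hcb ?_
    rw [← h₂, hSTP.apply_split_eq hc (fun _ => id) (by simp [C₁, C₂])]
  exact hSTP.decisiveOver_of_apply_eq h₃ (fun i hi u hu => by simp [hi, B₂, hu])
    fun i hi u hu => by simp [hi, C₁, hu, hne, em]
end

section
/- Let A be a set of alternatives with |A| ≥ 3 containing distinct a, b, let X be the set of strict linear orders on A, let I = {1,...,N}, and let f : X^N → A be a social choice function that is unanimous and strategy-proof. Let G_a and G_b be a partition of I, and let x' ∈ X^N be any profile such that x'_i ranks a first and b second for all i ∈ G_a, and x'_j ranks b first and a second for all j ∈ G_b. Then f(x') ∈ {a, b}. -/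
/-! Start from a profile in which everyone ranks `a` first, obtained by swapping `a` and `b` in
the rankings of `Gb`; unanimity makes `f` choose `a` there. Then restore the rankings of `Gb` one
individual at a time. Since each of them ranks `a` and `b` above everything else, an outcome
outside `{a, b}` right after the change would let that individual manipulate back to the previous
outcome, which by induction lies in `{a, b}`. -/

namespace Pref

variable {A B : Type*}

lemma asymm (p : Pref A) {u v : A} (h : p.1 u v) : ¬ p.1 v u :=
  fun h' => p.2.irrefl u (p.2.trans _ _ _ h h')

def comap (σ : A ↪ B) (p : Pref B) : Pref A :=
  ⟨σ ⁻¹'o p.1, haveI := p.2; (RelEmbedding.preimage σ p.1).isStrictTotalOrder⟩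

lemma ranksTop_comap {σ : A ↪ B} {p : Pref B} {a : A} (h : RanksTop p (σ a)) :
    RanksTop (p.comap σ) a :=
  fun _ hc => h _ (σ.injective.ne hc)

def IsTopSegment (p : Pref A) (S : Set A) : Prop :=
  ∀ u ∈ S, ∀ v ∉ S, p.1 u v

lemma isTopSegment_pair {p : Pref A} {a b : A} (hb : RanksTop p b) (ha : RanksSecond p a) :
    p.IsTopSegment {a, b} := by
  obtain ⟨c, hca, hc, habove⟩ := ha
  have hcb : c = b := by
    by_contra hcb
    have hba : p.1 b a := p.2.trans _ _ _ (hb c hcb) hc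
    have hba' : b ≠ a := fun e => p.2.irrefl b (e ▸ hba)
    exact p.asymm hba (habove b hba' (Ne.symm hcb))
  rintro u (rfl | rfl) v hv
  · exact habove v (fun e => hv (.inl e)) (fun e => hv (.inr (e.trans hcb)))
  · exact hb v (fun e => hv (.inr e))

end Pref

section StrategyProof

variable {A : Type*} {N : ℕ} {f : Profile A N → A}

lemma StrategyProof.mem_of_update {S : Set A} (hf : StrategyProof f) {y : Fin N → Pref A}
    {j : Fin N} {p : Pref A} (hp : p.IsTopSegment S) (hy : f y ∈ S) :
    f (Function.update y j p) ∈ S := by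
  by_contra hout
  apply hf (Function.update y j p) j (y j)
  simpa only [ManipulableAt, Function.update_self, Function.update_idem, Function.update_eq_self]
    using hp _ hy _ hout

lemma StrategyProof.mem_piecewise {S : Set A} (hf : StrategyProof f)
    (T : Finset (Fin N)) {x y : Fin N → Pref A} (hT : ∀ i ∈ T, (x i).IsTopSegment S)
    (hy : f y ∈ S) : f (T.piecewise x y) ∈ S := by
  induction T using Finset.induction_on with
  | empty => simpa using hy
  | insert j T _ ih =>
    rw [Finset.piecewise_insert]
    exact hf.mem_of_update (hT j (T.mem_insert_self j))
      (ih fun i hi => hT i (Finset.mem_insert_of_mem hi))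

end StrategyProof

theorem choice_in_pair_general {A : Type*} {N : ℕ}
    (a b : A)
    (f : Profile A N → A) (hUNM : Unanimous f) (hSTP : StrategyProof f)
    (Ga Gb : Set (Fin N)) (hcover : Ga ∪ Gb = Set.univ)
    (x' : Profile A N)
    (ha : ∀ i ∈ Ga, RanksTop (x' i) a ∧ RanksSecond (x' i) b)
    (hb : ∀ j ∈ Gb, RanksTop (x' j) b ∧ RanksSecond (x' j) a) :
    f x' = a ∨ f x' = b := by
  classical
  let y : Profile A N := fun i =>
    if i ∈ Gb then (x' i).comap (Equiv.swap a b).toEmbedding else x' i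
  have hy : f y = a := by
    refine hUNM a y fun i _ => ?_
    by_cases hi : i ∈ Gb
    · simpa [y, hi] using Pref.ranksTop_comap (σ := (Equiv.swap a b).toEmbedding) (a := a)
        (by simpa using (hb i hi).1)
    · have hGa : i ∈ Ga := (hcover ▸ Set.mem_univ i : i ∈ Ga ∪ Gb).resolve_right hi
      simpa [y, hi] using (ha i hGa).1
  have hx' : x' = (Finset.univ.filter (· ∈ Gb)).piecewise x' y := by
    funext i
    by_cases hi : i ∈ Gb <;> simp [Finset.piecewise, y, hi]
  have hpair : f x' ∈ ({a, b} : Set A) := by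
    rw [hx']
    refine hSTP.mem_piecewise _ (fun i hi => ?_) (by simp [hy])
    rw [Finset.mem_filter] at hi
    exact Pref.isTopSegment_pair (hb i hi.2).1 (hb i hi.2).2
  simpa using hpair

/-- If `I` is partitioned into `Ga` and `Gb`, everyone in `Ga` ranks `a` first and `b`
second, and everyone in `Gb` ranks `b` first and `a` second, then `f` chooses `a` or `b`. -/
theorem choice_in_pair {A : Type*} {N : ℕ} (hA : 3 ≤ Cardinal.mk A)
    (a b : A) (hab : a ≠ b)
    (f : Profile A N → A) (hUNM : Unanimous f) (hSTP : StrategyProof f)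
    (Ga Gb : Set (Fin N)) (hcover : Ga ∪ Gb = Set.univ) (hdisj : Ga ∩ Gb = ∅)
    (x' : Profile A N)
    (ha : ∀ i ∈ Ga, RanksTop (x' i) a ∧ RanksSecond (x' i) b)
    (hb : ∀ j ∈ Gb, RanksTop (x' j) b ∧ RanksSecond (x' j) a) :
    f x' = a ∨ f x' = b :=
  choice_in_pair_general a b f hUNM hSTP Ga Gb hcover x' ha hb
end
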